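/- Let α be a real number with 0 < α < π, set k₊ = −(2π−α)/α and k₋ = −α/(2π−α), and let k be a real number with k₊ < k < k₋ and k ≠ −1. Then there exists a unique real ξ > 0 such that F̃(ξ,α) = 2k/(k² + 1). -/

import Mathlib

open Real

/-- The hyperbolic dispersion function of the corner transmission problem. -/
noncomputable def Ftilde (ξ α : ℝ) : ℝ :=
  Real.sinh (α * ξ) * Real.sinh ((2 * Real.pi - α) * ξ) /
    (1 - Real.cosh (α * ξ) * Real.cosh ((2 * Real.pi - α) * ξ))

/-!
Writing `α ξ = a - b` and `(2π - α) ξ = a + b` with `a = π ξ`, `b = (π - α) ξ` gives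
`F̃ = (sinh² b - sinh² a) / (sinh² a + sinh² b)`, so `F̃ = 2k / (k² + 1)` says exactly that
`sinh (π ξ) / sinh ((π - α) ξ) = |(k - 1) / (k + 1)|`. On `ξ > 0` this ratio increases strictly
from `π / (π - α)` to `∞`, and `k₊ < k < k₋` is precisely the condition that
`|(k - 1) / (k + 1)|` exceeds `π / (π - α)`.
-/

open Filter Set Topology

lemma Ftilde_eq_sinh_sq (ξ α : ℝ) :
    Ftilde ξ α = (sinh ((π - α) * ξ) ^ 2 - sinh (π * ξ) ^ 2) /
      (sinh (π * ξ) ^ 2 + sinh ((π - α) * ξ) ^ 2) := by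
  have hsum : (2 * π - α) * ξ = π * ξ + (π - α) * ξ := by ring
  have hdiff : α * ξ = π * ξ - (π - α) * ξ := by ring
  rw [Ftilde, hsum, hdiff, sinh_sub, sinh_add, cosh_sub, cosh_add, ← neg_div_neg_eq]
  congr 1
  · linear_combination sinh ((π - α) * ξ) ^ 2 * cosh_sq (π * ξ) -
      sinh (π * ξ) ^ 2 * cosh_sq ((π - α) * ξ)
  · linear_combination cosh ((π - α) * ξ) ^ 2 * cosh_sq (π * ξ) +
      (sinh (π * ξ) ^ 2 + 1) * cosh_sq ((π - α) * ξ)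

lemma two_mul_div_sq_add_one_eq_iff {a b k : ℝ} (ha : 0 < a) (hb : 0 < b) (hk : k ≠ -1) :
    (b ^ 2 - a ^ 2) / (a ^ 2 + b ^ 2) = 2 * k / (k ^ 2 + 1) ↔ a / b = |(k - 1) / (k + 1)| := by
  have hk' : (k + 1) ^ 2 ≠ 0 := pow_ne_zero 2 (by contrapose! hk; linarith)
  rw [← sq_eq_sq₀ (div_pos ha hb).le (abs_nonneg _), sq_abs, div_pow, div_pow,
    div_eq_div_iff (by positivity) (by positivity), div_eq_div_iff (by positivity) hk']
  constructor <;> intro h <;> linear_combination (-1 : ℝ) * h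

lemma div_lt_abs_sub_one_div_add_one {m n k : ℝ} (hn : 0 < n) (hnm : n < m)
    (hkp : -(m + n) / (m - n) < k) (hkm : k < -(m - n) / (m + n)) (hk : k ≠ -1) :
    m / n < |(k - 1) / (k + 1)| := by
  have hkp' : -(m + n) < k * (m - n) := (div_lt_iff₀ (by linarith)).1 hkp
  have hkm' : k * (m + n) < -(m - n) := (lt_div_iff₀ (by linarith)).1 hkm
  rw [abs_div, abs_of_neg (by nlinarith : k - 1 < 0), div_lt_div_iff₀ hn (abs_pos.2 ?_)]
  · rcases lt_or_gt_of_ne hk with hk | hk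
    · rw [abs_of_neg (by linarith)]; nlinarith
    · rw [abs_of_pos (by linarith)]; nlinarith
  · contrapose! hk; linarith

lemma hasDerivAt_sinh_mul (c x : ℝ) : HasDerivAt (fun x ↦ sinh (c * x)) (c * cosh (c * x)) x := by
  simpa [mul_comm] using ((hasDerivAt_id x).const_mul c).sinh

lemma hasDerivAt_cosh_mul (c x : ℝ) : HasDerivAt (fun x ↦ cosh (c * x)) (c * sinh (c * x)) x := by
  simpa [mul_comm] using ((hasDerivAt_id x).const_mul c).cosh

lemma tendsto_cosh_atTop : Tendsto cosh atTop atTop :=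
  tendsto_atTop_mono (fun x ↦ by rw [cosh_eq]; linarith [exp_pos (-x)])
    (tendsto_exp_atTop.atTop_div_const two_pos)

section SinhRatio

variable {m n : ℝ}

lemma mul_sinh_mul_cosh_mul_lt (hn : 0 < n) (hnm : n < m) {x : ℝ} (hx : 0 < x) :
    n * sinh (m * x) * cosh (n * x) < m * cosh (m * x) * sinh (n * x) := by
  set N : ℝ → ℝ := fun x ↦ m * cosh (m * x) * sinh (n * x) - n * sinh (m * x) * cosh (n * x)
  have hN : ∀ x, HasDerivAt N ((m ^ 2 - n ^ 2) * sinh (m * x) * sinh (n * x)) x := fun x ↦ by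
    refine ((((hasDerivAt_cosh_mul m x).const_mul m).mul (hasDerivAt_sinh_mul n x)).sub
      (((hasDerivAt_sinh_mul m x).const_mul n).mul (hasDerivAt_cosh_mul n x))).congr_deriv ?_
    ring
  have hmono : StrictMonoOn N (Ici 0) := by
    refine strictMonoOn_of_deriv_pos (convex_Ici 0)
      (HasDerivAt.continuousOn fun x _ ↦ hN x) fun y hy ↦ ?_
    rw [interior_Ici, mem_Ioi] at hy
    rw [(hN y).deriv]
    have := sinh_pos_iff.2 (mul_pos (hn.trans hnm) hy)
    have := sinh_pos_iff.2 (mul_pos hn hy)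
    have : 0 < m ^ 2 - n ^ 2 := by nlinarith
    positivity
  have := hmono self_mem_Ici hx.le hx
  simp only [N, mul_zero, sinh_zero, cosh_zero] at this
  linarith

lemma continuousOn_sinh_mul_div_sinh_mul (hn : n ≠ 0) :
    ContinuousOn (fun x ↦ sinh (m * x) / sinh (n * x)) (Ioi 0) :=
  (by fun_prop : Continuous fun x ↦ sinh (m * x)).continuousOn.div (by fun_prop)
    fun x hx ↦ sinh_ne_zero.2 (mul_ne_zero hn (ne_of_gt hx))

lemma strictMonoOn_sinh_mul_div_sinh_mul (hn : 0 < n) (hnm : n < m) :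
    StrictMonoOn (fun x ↦ sinh (m * x) / sinh (n * x)) (Ioi 0) := by
  refine strictMonoOn_of_deriv_pos (convex_Ioi 0) (continuousOn_sinh_mul_div_sinh_mul hn.ne')
    fun x hx ↦ ?_
  rw [interior_Ioi, mem_Ioi] at hx
  have hsinh : 0 < sinh (n * x) := sinh_pos_iff.2 (mul_pos hn hx)
  have hderiv : HasDerivAt (fun x ↦ sinh (m * x) / sinh (n * x)) _ x :=
    (hasDerivAt_sinh_mul m x).div (hasDerivAt_sinh_mul n x) hsinh.ne'
  rw [hderiv.deriv]
  have := mul_sinh_mul_cosh_mul_lt hn hnm hx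
  exact div_pos (by linarith) (by positivity)

lemma sinh_mul_div_sinh_mul_lt (hn : 0 < n) (hnm : n < m) {x : ℝ} (hx : 0 < x) :
    sinh (m * x) / sinh (n * x) < m * cosh (m * x) / (n * cosh (n * x)) := by
  have := sinh_pos_iff.2 (mul_pos hn hx)
  rw [div_lt_div_iff₀ this (by positivity)]
  linarith [mul_sinh_mul_cosh_mul_lt hn hnm hx]

lemma cosh_sub_mul_lt_sinh_mul_div_sinh_mul (hn : 0 < n) (hnm : n < m) {x : ℝ} (hx : 0 < x) :
    cosh ((m - n) * x) < sinh (m * x) / sinh (n * x) := by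
  have hsinh : 0 < sinh (n * x) := sinh_pos_iff.2 (mul_pos hn hx)
  have : 0 < sinh ((m - n) * x) := sinh_pos_iff.2 (mul_pos (sub_pos.2 hnm) hx)
  rw [lt_div_iff₀ hsinh, show m * x = (m - n) * x + n * x by ring, sinh_add]
  nlinarith [cosh_pos (n * x)]

lemma tendsto_sinh_mul_div_sinh_mul_atTop (hn : 0 < n) (hnm : n < m) :
    Tendsto (fun x ↦ sinh (m * x) / sinh (n * x)) atTop atTop := by
  refine tendsto_atTop_mono' _ ?_
    (tendsto_cosh_atTop.comp (tendsto_id.const_mul_atTop (sub_pos.2 hnm)))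
  filter_upwards [eventually_gt_atTop 0] with x hx
  exact (cosh_sub_mul_lt_sinh_mul_div_sinh_mul hn hnm hx).le

lemma exists_sinh_mul_div_sinh_mul_eq (hn : 0 < n) (hnm : n < m) {r : ℝ} (hr : m / n < r) :
    ∃ x, 0 < x ∧ sinh (m * x) / sinh (n * x) = r := by
  have hnear : ∀ᶠ x in 𝓝[>] 0, sinh (m * x) / sinh (n * x) < r := by
    have hbound : ∀ᶠ x in 𝓝 0, m * cosh (m * x) / (n * cosh (n * x)) < r := by
      refine ContinuousAt.eventually_lt (by fun_prop (disch := positivity)) continuousAt_const ?_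
      simpa using hr
    filter_upwards [nhdsWithin_le_nhds hbound, self_mem_nhdsWithin] with x hx hx0
    exact (sinh_mul_div_sinh_mul_lt hn hnm hx0).trans hx
  obtain ⟨x₁, hx₁, hx₁0⟩ := (hnear.and self_mem_nhdsWithin).exists
  obtain ⟨x₂, hx₂, hx₂0⟩ := (((tendsto_sinh_mul_div_sinh_mul_atTop hn hnm).eventually_gt_atTop r).and
    (eventually_gt_atTop 0)).exists
  have hsub : uIcc x₁ x₂ ⊆ Ioi 0 := ordConnected_Ioi.uIcc_subset hx₁0 hx₂0
  obtain ⟨x, hx, hrx⟩ := intermediate_value_uIcc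
    ((continuousOn_sinh_mul_div_sinh_mul hn.ne').mono hsub) (mem_uIcc_of_le hx₁.le hx₂.le)
  exact ⟨x, hsub hx, hrx⟩

end SinhRatio

lemma Ftilde_eq_two_mul_div_iff {α ξ k : ℝ} (hα : α < π) (hξ : 0 < ξ) (hk : k ≠ -1) :
    Ftilde ξ α = 2 * k / (k ^ 2 + 1) ↔ sinh (π * ξ) / sinh ((π - α) * ξ) = |(k - 1) / (k + 1)| := by
  rw [Ftilde_eq_sinh_sq]
  exact two_mul_div_sq_add_one_eq_iff (sinh_pos_iff.2 (by positivity))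
    (sinh_pos_iff.2 (mul_pos (sub_pos.2 hα) hξ)) hk

theorem hyperbolic_dispersion_solvable_inside_critical
    (α : ℝ) (hα0 : 0 < α) (hαπ : α < Real.pi)
    (k : ℝ) (hkp : -(2 * Real.pi - α) / α < k) (hkm : k < -α / (2 * Real.pi - α))
    (hk1 : k ≠ -1) :
    ∃! ξ : ℝ, 0 < ξ ∧ Ftilde ξ α = 2 * k / (k ^ 2 + 1) := by
  have hn : 0 < π - α := sub_pos.2 hαπ
  have hnm : π - α < π := sub_lt_self π hα0
  have hsum : π + (π - α) = 2 * π - α := by ring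
  have hr : π / (π - α) < |(k - 1) / (k + 1)| :=
    div_lt_abs_sub_one_div_add_one hn hnm (by rwa [hsum, sub_sub_cancel])
      (by rwa [hsum, sub_sub_cancel]) hk1
  obtain ⟨ξ, hξ, hξr⟩ := exists_sinh_mul_div_sinh_mul_eq hn hnm hr
  refine ⟨ξ, ⟨hξ, (Ftilde_eq_two_mul_div_iff hαπ hξ hk1).2 hξr⟩, fun η ⟨hη, hFη⟩ ↦ ?_⟩
  exact (strictMonoOn_sinh_mul_div_sinh_mul hn hnm).injOn hη hξ
    (((Ftilde_eq_two_mul_div_iff hαπ hη hk1).1 hFη).trans hξr.symm)
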